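/- arXiv:1411.0358 — 3 statements merged into one kernel-verified Lean document; each statement's English description precedes it below -/
import Mathlib

section
/- Let A be a commutative algebra over ℂ, let D = (D_p)_{p≥0} be a normalized higher derivation on A, let k ≥ 0, and let φ : {0,1,...,m} → {0,1,...,n} be any map of finite sets. Then L_D^{k,(n)} ∘ L(A)(φ) = L(A)(φ) ∘ L_D^{k,(m)} as ℂ-linear maps from A^{⊗(m+1)} to A^{⊗(n+1)}. -/
/-!
A normalized higher derivation is the same thing as an algebra map `E : A → A⟦X⟧`,
`a ↦ ∑ₚ Dₚ(a) Xᵖ`. Since `⨂ A` is the coproduct of commutative algebras, `E` induces an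
algebra map `Ẽ : ⨂ A → (⨂ A)⟦X⟧` sending the `i`-th tensor factor through `E`, and `L_D^k` is
the `k`-th coefficient of `Ẽ`. The map `L(A)(φ)` is the algebra map sending the `i`-th factor
to the `φ(i)`-th one, so `Ẽ ∘ L(A)(φ)` and `L(A)(φ) ∘ Ẽ` agree on the generators
`1 ⊗ ⋯ ⊗ a ⊗ ⋯ ⊗ 1`, hence everywhere; taking `k`-th coefficients gives the claim.
-/

open PiTensorProduct Finset PowerSeries
open scoped TensorProduct

section HigherDerivation

variable {R A : Type*} [CommSemiring R] [CommRing A] [Algebra R A]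

def IsHigherDerivation (D : ℕ → A →ₗ[R] A) : Prop :=
  ∀ (p : ℕ) (a a' : A), D p (a * a') = ∑ i ∈ range (p + 1), D i a * D (p - i) a'

def higherDerivationSeries (D : ℕ → A →ₗ[R] A) : A →ₗ[R] A⟦X⟧ where
  toFun a := mk fun p => D p a
  map_add' a b := by ext p; simp
  map_smul' c a := by ext p; simp

@[simp]
lemma coeff_higherDerivationSeries (D : ℕ → A →ₗ[R] A) (p : ℕ) (a : A) :
    coeff p (higherDerivationSeries D a) = D p a :=
  coeff_mk p fun q => D q a

namespace IsHigherDerivation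

variable {D : ℕ → A →ₗ[R] A}

lemma higherDerivationSeries_mul (hD : IsHigherDerivation D) (a a' : A) :
    higherDerivationSeries D (a * a') =
      higherDerivationSeries D a * higherDerivationSeries D a' := by
  ext p
  simp [coeff_mul, Finset.Nat.sum_antidiagonal_eq_sum_range_succ_mk, hD p]

-- The series of `1` is an idempotent with constant coefficient `1`, hence a unit, hence `1`.
lemma higherDerivationSeries_one (hD : IsHigherDerivation D) (hD0 : D 0 = LinearMap.id) :
    higherDerivationSeries D 1 = 1 := by
  have hunit : IsUnit (higherDerivationSeries D 1) :=
    isUnit_iff_constantCoeff.mpr (by simp [← coeff_zero_eq_constantCoeff_apply, hD0])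
  refine hunit.mul_left_cancel ?_
  rw [mul_one, ← hD.higherDerivationSeries_mul, one_mul]

noncomputable def toAlgHom (hD : IsHigherDerivation D) (hD0 : D 0 = LinearMap.id) :
    A →ₐ[R] A⟦X⟧ :=
  AlgHom.ofLinearMap (higherDerivationSeries D) (hD.higherDerivationSeries_one hD0)
    hD.higherDerivationSeries_mul

@[simp]
lemma coeff_toAlgHom (hD : IsHigherDerivation D) (hD0 : D 0 = LinearMap.id) (p : ℕ) (a : A) :
    coeff p (hD.toAlgHom hD0 a) = D p a :=
  coeff_higherDerivationSeries D p a

end IsHigherDerivation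

end HigherDerivation

namespace PiTensorProduct

section Family

variable {R ι S : Type*} {A : ι → Type*} [CommSemiring R] [∀ i, CommSemiring (A i)]
  [∀ i, Algebra R (A i)] [CommSemiring S] [Algebra R S] [Fintype ι]

noncomputable def liftCommAlgHom (f : ∀ i, A i →ₐ[R] S) : (⨂[R] i, A i) →ₐ[R] S :=
  liftAlgHom ((MultilinearMap.mkPiAlgebra R ι S).compLinearMap fun i => (f i).toLinearMap)
    (by simp) (by simp [prod_mul_distrib])

@[simp]
lemma liftCommAlgHom_tprod (f : ∀ i, A i →ₐ[R] S) (a : ∀ i, A i) :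
    liftCommAlgHom f (tprod R a) = ∏ i, f i (a i) := by
  change lift _ (tprod R a) = _
  simp

variable [DecidableEq ι]

@[simp]
lemma liftCommAlgHom_comp_singleAlgHom (f : ∀ i, A i →ₐ[R] S) (i : ι) :
    (liftCommAlgHom f).comp (singleAlgHom i) = f i := by
  ext a
  rw [AlgHom.comp_apply, singleAlgHom_apply, liftCommAlgHom_tprod,
    Fintype.prod_eq_single i fun j hj => by
      rw [MonoidHom.mulSingle_apply, Pi.mulSingle_eq_of_ne hj, map_one]]
  simp

@[simp]
lemma liftCommAlgHom_singleAlgHom :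
    liftCommAlgHom (singleAlgHom (R := R) (A := A)) = AlgHom.id R _ :=
  algHom_ext fun i => by simp [AlgHom.id_comp]

lemma prod_singleAlgHom (a : ∀ i, A i) : ∏ i, singleAlgHom (R := R) i (a i) = tprod R a := by
  rw [← liftCommAlgHom_tprod, liftCommAlgHom_singleAlgHom, AlgHom.id_apply]

end Family

variable {R ι κ A : Type*} [CommSemiring R] [CommSemiring A] [Algebra R A] [Fintype ι]
  [DecidableEq κ]

noncomputable def inducedAlgHom (φ : ι → κ) : (⨂[R] _ : ι, A) →ₐ[R] ⨂[R] _ : κ, A :=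
  liftCommAlgHom fun i => singleAlgHom (A := fun _ => A) (φ i)

@[simp]
lemma inducedAlgHom_comp_singleAlgHom [DecidableEq ι] (φ : ι → κ) (i : ι) :
    (inducedAlgHom φ).comp (singleAlgHom i) = singleAlgHom (R := R) (A := fun _ => A) (φ i) :=
  liftCommAlgHom_comp_singleAlgHom _ i

lemma inducedAlgHom_tprod [Fintype κ] (φ : ι → κ) (a : ι → A) :
    inducedAlgHom φ (tprod R a) = tprod R fun j => ∏ i ∈ univ.filter (φ · = j), a i := by
  rw [inducedAlgHom, liftCommAlgHom_tprod, ← prod_fiberwise univ φ, ← prod_singleAlgHom]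
  refine prod_congr rfl fun j _ => ?_
  rw [map_prod]
  exact prod_congr rfl fun i hi => by rw [(mem_filter.mp hi).2]

variable [DecidableEq ι]

noncomputable def powerSeriesAlgHom (E : A →ₐ[R] A⟦X⟧) :
    (⨂[R] _ : ι, A) →ₐ[R] (⨂[R] _ : ι, A)⟦X⟧ :=
  liftCommAlgHom fun i => (mapAlgHom (singleAlgHom i)).comp E

@[simp]
lemma powerSeriesAlgHom_comp_singleAlgHom (E : A →ₐ[R] A⟦X⟧) (i : ι) :
    (powerSeriesAlgHom E).comp (singleAlgHom i) = (mapAlgHom (singleAlgHom i)).comp E :=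
  liftCommAlgHom_comp_singleAlgHom _ i

lemma coeff_powerSeriesAlgHom_tprod (E : A →ₐ[R] A⟦X⟧) (k : ℕ) (a : ι → A) :
    coeff k (powerSeriesAlgHom E (tprod R a)) =
      ∑ p ∈ piAntidiag univ k, tprod R fun i => coeff (p i) (E (a i)) := by
  simp only [powerSeriesAlgHom, liftCommAlgHom_tprod, AlgHom.comp_apply, mapAlgHom_apply,
    coeff_prod, coeff_map, RingHom.coe_coe, prod_singleAlgHom, finsuppAntidiag, sum_map]
  exact sum_attach (univ.piAntidiag k) fun p => tprod R fun i => coeff (p i) (E (a i))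

lemma apply_eq_coeff_powerSeriesAlgHom (E : A →ₐ[R] A⟦X⟧) (k : ℕ)
    (L : (⨂[R] _ : ι, A) →ₗ[R] ⨂[R] _ : ι, A)
    (hL : ∀ a, L (tprod R a) = ∑ p ∈ piAntidiag univ k, tprod R fun i => coeff (p i) (E (a i)))
    (x : ⨂[R] _ : ι, A) :
    L x = coeff k (powerSeriesAlgHom E x) := by
  suffices L = ((coeff k).restrictScalars R).comp (powerSeriesAlgHom E).toLinearMap from
    LinearMap.congr_fun this x
  refine PiTensorProduct.ext <| MultilinearMap.ext fun a => ?_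
  simp [hL, coeff_powerSeriesAlgHom_tprod]

lemma powerSeriesAlgHom_comp_inducedAlgHom [Fintype κ] (E : A →ₐ[R] A⟦X⟧) (φ : ι → κ) :
    (powerSeriesAlgHom E).comp (inducedAlgHom φ) =
      (mapAlgHom (inducedAlgHom φ)).comp (powerSeriesAlgHom E) := by
  refine algHom_ext fun i => ?_
  rw [AlgHom.comp_assoc, AlgHom.comp_assoc, inducedAlgHom_comp_singleAlgHom,
    powerSeriesAlgHom_comp_singleAlgHom, powerSeriesAlgHom_comp_singleAlgHom]
  ext a n
  simp only [AlgHom.comp_apply, mapAlgHom_apply, coeff_map, RingHom.coe_coe]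
  rw [← AlgHom.comp_apply (inducedAlgHom φ), inducedAlgHom_comp_singleAlgHom]

end PiTensorProduct

/-- For a normalized higher derivation `D = (D_p)` on a commutative ℂ-algebra
`A`, any `k ≥ 0` and any map `φ : {0,…,m} → {0,…,n}` of finite sets, the operator
`L_D^{k} = ∑_{p_0+⋯+p_n=k} D_{p_0} ⊗ ⋯ ⊗ D_{p_n}` commutes with the induced map
`L(A)(φ) : A^{⊗(m+1)} → A^{⊗(n+1)}`. -/
theorem higher_derivation_operator_commutes_with_induced_map
    {A : Type*} [CommRing A] [Algebra ℂ A]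
    (D : ℕ → (A →ₗ[ℂ] A)) (hD0 : D 0 = LinearMap.id)
    (hD : ∀ (p : ℕ) (a a' : A),
      D p (a * a') = ∑ i ∈ Finset.range (p + 1), D i a * D (p - i) a')
    (k m n : ℕ) (φ : Fin (m + 1) → Fin (n + 1))
    (LDm : (⨂[ℂ] _ : Fin (m + 1), A) →ₗ[ℂ] ⨂[ℂ] _ : Fin (m + 1), A)
    (LDn : (⨂[ℂ] _ : Fin (n + 1), A) →ₗ[ℂ] ⨂[ℂ] _ : Fin (n + 1), A)
    (Lφ : (⨂[ℂ] _ : Fin (m + 1), A) →ₗ[ℂ] ⨂[ℂ] _ : Fin (n + 1), A)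
    (hLDm : ∀ a : Fin (m + 1) → A,
      LDm (tprod ℂ a) =
        ∑ p ∈ Finset.Nat.antidiagonalTuple (m + 1) k, tprod ℂ (fun i => D (p i) (a i)))
    (hLDn : ∀ a : Fin (n + 1) → A,
      LDn (tprod ℂ a) =
        ∑ p ∈ Finset.Nat.antidiagonalTuple (n + 1) k, tprod ℂ (fun i => D (p i) (a i)))
    (hLφ : ∀ a : Fin (m + 1) → A,
      Lφ (tprod ℂ a) =
        tprod ℂ (fun j => ∏ i ∈ univ.filter fun i => φ i = j, a i)) :
    LDn ∘ₗ Lφ = Lφ ∘ₗ LDm := by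
  let E := IsHigherDerivation.toAlgHom hD hD0
  have hE : ∀ p a, coeff p (E a) = D p a := IsHigherDerivation.coeff_toAlgHom hD hD0
  have hLφ' : Lφ = (inducedAlgHom φ).toLinearMap :=
    PiTensorProduct.ext <| MultilinearMap.ext fun a => by simp [hLφ, inducedAlgHom_tprod]
  have hLDm' := apply_eq_coeff_powerSeriesAlgHom E k LDm fun a => by
    simp [hE, hLDm, piAntidiag_univ_fin_eq_antidiagonalTuple]
  have hLDn' := apply_eq_coeff_powerSeriesAlgHom E k LDn fun a => by
    simp [hE, hLDn, piAntidiag_univ_fin_eq_antidiagonalTuple]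
  refine LinearMap.ext fun x => ?_
  calc LDn (Lφ x) = coeff k (powerSeriesAlgHom E (inducedAlgHom φ x)) := by rw [hLDn', hLφ']; rfl
    _ = coeff k (mapAlgHom (inducedAlgHom φ) (powerSeriesAlgHom E x)) := by
      rw [← AlgHom.comp_apply, powerSeriesAlgHom_comp_inducedAlgHom, AlgHom.comp_apply]
    _ = Lφ (LDm x) := by rw [mapAlgHom_apply, coeff_map, hLDm', hLφ']; rfl
end

section
/- Let A be a commutative algebra over ℂ, let D = (D_p)_{p≥0} be a normalized higher derivation on A, let q ∈ ℂ, let k ≥ 0 and let n ≥ 1. Then qb_n ∘ L_D^{k,(n)} = L_D^{k,(n−1)} ∘ qb_n as ℂ-linear maps from A^{⊗(n+1)} to A^{⊗n}. -/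
/-!
Every face map `d_n^i` multiplies two cyclically adjacent tensor factors. Applying `D_r` to such a
product and expanding by the Leibniz rule `D_r(a a') = ∑ D_s(a) D_{r-s}(a')` splits the exponent
`r` between the two merged factors, and every exponent tuple for the `n + 1` unmerged factors
arises exactly once from an exponent tuple for the `n` merged ones together with such a split.
Hence each face map separately commutes with `L_D^k`, and so does every linear combination of them.
-/

open PiTensorProduct Finset
open scoped TensorProduct

/-- The face map `d_n^i` is `tprod` of `mergeAt (· * ·) i i` for `i < n`, and of
`mergeAt (· * ·) n 0` for `i = n`. -/
def mergeAt {α : Type*} {n : ℕ} (op : α → α → α) (pivot : Fin (n + 1)) (slot : Fin n)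
    (x : Fin (n + 1) → α) : Fin n → α :=
  Function.update (fun j => x (pivot.succAbove j)) slot (op (x pivot) (x (pivot.succAbove slot)))

/-- For `s ≤ r slot`, the unique `p` with `mergeAt (· + ·) pivot slot p = r` and
`p pivot = s`. -/
def splitAt {n : ℕ} (pivot : Fin (n + 1)) (slot : Fin n) (r : Fin n → ℕ) (s : ℕ) :
    Fin (n + 1) → ℕ :=
  Fin.insertNth pivot s (Function.update r slot (r slot - s))

section Combinatorics

variable {n : ℕ} (pivot : Fin (n + 1)) (slot : Fin n)

@[simp]
lemma mergeAt_apply_slot {α : Type*} (op : α → α → α) (x : Fin (n + 1) → α) :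
    mergeAt op pivot slot x slot = op (x pivot) (x (pivot.succAbove slot)) :=
  Function.update_self ..

lemma mergeAt_apply_of_ne {α : Type*} (op : α → α → α) (x : Fin (n + 1) → α) {j : Fin n}
    (hj : j ≠ slot) : mergeAt op pivot slot x j = x (pivot.succAbove j) :=
  Function.update_of_ne hj ..

lemma sum_mergeAt_add {M : Type*} [AddCommMonoid M] (x : Fin (n + 1) → M) :
    ∑ j, mergeAt (· + ·) pivot slot x j = ∑ m, x m := by
  rw [mergeAt, sum_update_of_mem (mem_univ slot), Fin.sum_univ_succAbove x pivot,
    sum_eq_add_sum_sdiff_singleton_of_mem (mem_univ slot) (fun j => x (pivot.succAbove j)),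
    add_assoc]

@[simp]
lemma splitAt_apply_pivot (r : Fin n → ℕ) (s : ℕ) : splitAt pivot slot r s pivot = s :=
  Fin.insertNth_apply_same ..

@[simp]
lemma splitAt_apply_succAbove (r : Fin n → ℕ) (s : ℕ) (j : Fin n) :
    splitAt pivot slot r s (pivot.succAbove j) = Function.update r slot (r slot - s) j :=
  Fin.insertNth_apply_succAbove ..

lemma mergeAt_add_splitAt {r : Fin n → ℕ} {s : ℕ} (hs : s ≤ r slot) :
    mergeAt (· + ·) pivot slot (splitAt pivot slot r s) = r := by
  ext j
  rcases eq_or_ne j slot with rfl | hj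
  · simp only [mergeAt_apply_slot, splitAt_apply_pivot, splitAt_apply_succAbove,
      Function.update_self]
    omega
  · simp [mergeAt_apply_of_ne _ _ _ _ hj, hj]

lemma splitAt_mergeAt_add (p : Fin (n + 1) → ℕ) :
    splitAt pivot slot (mergeAt (· + ·) pivot slot p) (p pivot) = p := by
  ext m
  refine Fin.succAboveCases pivot ?_ (fun j => ?_) m
  · simp
  · rcases eq_or_ne j slot with rfl | hj
    · simp
    · simp [mergeAt_apply_of_ne _ _ _ _ hj, hj]

lemma sum_antidiagonalTuple_eq_sum_splitAt {M : Type*} [AddCommMonoid M] (k : ℕ)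
    (f : (Fin (n + 1) → ℕ) → M) :
    ∑ p ∈ Finset.Nat.antidiagonalTuple (n + 1) k, f p =
      ∑ r ∈ Finset.Nat.antidiagonalTuple n k, ∑ s ∈ range (r slot + 1),
        f (splitAt pivot slot r s) := by
  rw [sum_sigma']
  symm
  refine sum_nbij' (fun x => splitAt pivot slot x.1 x.2)
    (fun p => ⟨mergeAt (· + ·) pivot slot p, p pivot⟩) ?_ ?_ ?_ ?_ (fun _ _ => rfl)
  · rintro ⟨r, s⟩ hrs
    rw [mem_sigma, Finset.Nat.mem_antidiagonalTuple, mem_range] at hrs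
    rw [Finset.Nat.mem_antidiagonalTuple, ← sum_mergeAt_add pivot slot,
      mergeAt_add_splitAt pivot slot (by omega), hrs.1]
  · intro p hp
    rw [Finset.Nat.mem_antidiagonalTuple] at hp
    rw [mem_sigma, Finset.Nat.mem_antidiagonalTuple, mem_range, sum_mergeAt_add, hp]
    exact ⟨rfl, by simp⟩
  · rintro ⟨r, s⟩ hrs
    rw [mem_sigma, mem_range] at hrs
    simp [mergeAt_add_splitAt pivot slot (Nat.lt_succ_iff.mp hrs.2)]
  · intro p _
    exact splitAt_mergeAt_add pivot slot p

lemma mergeAt_mul_splitAt {α : Type*} [Mul α] (D : ℕ → α → α) (a : Fin (n + 1) → α)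
    (r : Fin n → ℕ) (s : ℕ) :
    mergeAt (· * ·) pivot slot (fun m => D (splitAt pivot slot r s m) (a m)) =
      Function.update (fun j => D (r j) (a (pivot.succAbove j))) slot
        (D s (a pivot) * D (r slot - s) (a (pivot.succAbove slot))) := by
  ext j
  rcases eq_or_ne j slot with rfl | hj
  · simp
  · simp [mergeAt_apply_of_ne _ _ _ _ hj, hj]

end Combinatorics

section HigherDerivation

variable {n : ℕ} {R A : Type*} [CommSemiring R] [Semiring A] [Module R A]
  (pivot : Fin (n + 1)) (slot : Fin n)

lemma tprod_apply_mergeAt_mul (D : ℕ → A →ₗ[R] A)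
    (hD : ∀ (p : ℕ) (a a' : A), D p (a * a') = ∑ i ∈ range (p + 1), D i a * D (p - i) a')
    (a : Fin (n + 1) → A) (r : Fin n → ℕ) :
    tprod R (fun j => D (r j) (mergeAt (· * ·) pivot slot a j)) =
      ∑ s ∈ range (r slot + 1),
        tprod R (Function.update (fun j => D (r j) (a (pivot.succAbove j))) slot
          (D s (a pivot) * D (r slot - s) (a (pivot.succAbove slot)))) := by
  have hupdate : (fun j => D (r j) (mergeAt (· * ·) pivot slot a j)) =
      Function.update (fun j => D (r j) (a (pivot.succAbove j))) slot
        (D (r slot) (a pivot * a (pivot.succAbove slot))) :=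
    funext (Function.apply_update (fun j => D (r j)) _ _ _)
  rw [hupdate, hD, MultilinearMap.map_update_sum]

theorem sum_tprod_mergeAt_mul (D : ℕ → A →ₗ[R] A)
    (hD : ∀ (p : ℕ) (a a' : A), D p (a * a') = ∑ i ∈ range (p + 1), D i a * D (p - i) a')
    (k : ℕ) (a : Fin (n + 1) → A) :
    ∑ p ∈ Finset.Nat.antidiagonalTuple (n + 1) k,
        tprod R (mergeAt (· * ·) pivot slot fun m => D (p m) (a m)) =
      ∑ r ∈ Finset.Nat.antidiagonalTuple n k,
        tprod R (fun j => D (r j) (mergeAt (· * ·) pivot slot a j)) := by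
  rw [sum_antidiagonalTuple_eq_sum_splitAt pivot slot]
  refine sum_congr rfl fun r _ => ?_
  rw [tprod_apply_mergeAt_mul pivot slot D hD]
  exact sum_congr rfl fun s _ => congrArg _ (mergeAt_mul_splitAt pivot slot (D ·) a r s)

end HigherDerivation

lemma innerFace_eq_mergeAt {α : Type*} [Mul α] {n : ℕ} (i : Fin n) (a : Fin (n + 1) → α) :
    (fun j : Fin n => if (j : ℕ) < i then a j.castSucc
      else if (j : ℕ) = i then a j.castSucc * a j.succ else a j.succ) =
      mergeAt (· * ·) i.castSucc i a := by
  ext j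
  rcases lt_trichotomy j i with hj | rfl | hj
  · rw [mergeAt_apply_of_ne _ _ _ _ hj.ne, Fin.succAbove_castSucc_of_lt _ _ hj,
      if_pos (Fin.lt_def.mp hj)]
  · simp
  · rw [mergeAt_apply_of_ne _ _ _ _ hj.ne', Fin.succAbove_castSucc_of_le _ _ hj.le,
      if_neg (by omega), if_neg (by omega)]

lemma lastFace_eq_mergeAt {α : Type*} [Mul α] {n : ℕ} (a : Fin (n + 2) → α) :
    (fun j : Fin (n + 1) => if (j : ℕ) = 0 then a (Fin.last (n + 1)) * a 0 else a j.castSucc) =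
      mergeAt (· * ·) (Fin.last (n + 1)) 0 a := by
  ext j
  rcases eq_or_ne j 0 with rfl | hj
  · simp
  · rw [mergeAt_apply_of_ne _ _ _ _ hj, Fin.succAbove_last, if_neg (Fin.val_ne_zero_iff.mpr hj)]

theorem q_hochschild_differential_commutes_with_higher_derivation_operator_general
    {A : Type*} [CommRing A] [Algebra ℂ A]
    (D : ℕ → (A →ₗ[ℂ] A))
    (hD : ∀ (p : ℕ) (a a' : A),
      D p (a * a') = ∑ i ∈ Finset.range (p + 1), D i a * D (p - i) a')
    (q : ℂ) (k n : ℕ)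
    (d : Fin (n + 2) → ((⨂[ℂ] _ : Fin (n + 2), A) →ₗ[ℂ] ⨂[ℂ] _ : Fin (n + 1), A))
    (hd : ∀ (i : Fin (n + 2)) (a : Fin (n + 2) → A),
      d i (tprod ℂ a) =
        if (i : ℕ) < n + 1 then
          tprod ℂ (fun j : Fin (n + 1) =>
            if (j : ℕ) < (i : ℕ) then a j.castSucc
            else if (j : ℕ) = (i : ℕ) then a j.castSucc * a j.succ
            else a j.succ)
        else
          tprod ℂ (fun j : Fin (n + 1) =>
            if (j : ℕ) = 0 then a (Fin.last (n + 1)) * a 0 else a j.castSucc))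
    (L₁ : (⨂[ℂ] _ : Fin (n + 2), A) →ₗ[ℂ] ⨂[ℂ] _ : Fin (n + 2), A)
    (L₀ : (⨂[ℂ] _ : Fin (n + 1), A) →ₗ[ℂ] ⨂[ℂ] _ : Fin (n + 1), A)
    (hL₁ : ∀ a : Fin (n + 2) → A,
      L₁ (tprod ℂ a) =
        ∑ p ∈ Finset.Nat.antidiagonalTuple (n + 2) k, tprod ℂ (fun i => D (p i) (a i)))
    (hL₀ : ∀ a : Fin (n + 1) → A,
      L₀ (tprod ℂ a) =
        ∑ p ∈ Finset.Nat.antidiagonalTuple (n + 1) k, tprod ℂ (fun i => D (p i) (a i))) :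
    (∑ i : Fin (n + 2), q ^ (i : ℕ) • d i) ∘ₗ L₁ =
      L₀ ∘ₗ (∑ i : Fin (n + 2), q ^ (i : ℕ) • d i) := by
  suffices h : ∀ i, d i ∘ₗ L₁ = L₀ ∘ₗ d i by
    refine LinearMap.ext fun x => ?_
    simp only [LinearMap.comp_apply, LinearMap.sum_apply, LinearMap.smul_apply, map_sum, map_smul]
    exact sum_congr rfl fun i _ => by rw [← LinearMap.comp_apply, h, LinearMap.comp_apply]
  intro i
  obtain ⟨pivot, slot, hface⟩ : ∃ pivot slot,
      ∀ a, d i (tprod ℂ a) = tprod ℂ (mergeAt (· * ·) pivot slot a) := by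
    induction i using Fin.lastCases with
    | last => exact ⟨_, _, fun a => by rw [hd, if_neg (by simp), lastFace_eq_mergeAt]⟩
    | cast i =>
      exact ⟨_, _, fun a => by
        rw [hd, if_pos (by simpa using i.is_lt), Fin.val_castSucc, innerFace_eq_mergeAt]⟩
  ext a
  simp only [LinearMap.compMultilinearMap_apply, LinearMap.comp_apply]
  rw [hL₁, map_sum]
  simp only [hface]
  rw [sum_tprod_mergeAt_mul pivot slot D hD, hL₀]

/-- For a normalized higher derivation `D = (D_p)` on a commutative ℂ-algebra
`A`, any `q ∈ ℂ`, any `k ≥ 0` and any `n ≥ 1` (written here as `n + 1` for `n : ℕ`),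
the operator `L_D^{k}` commutes with the `q`-Hochschild differential
`qb_{n+1} = ∑_{i=0}^{n+1} q^i d_{n+1}^i : A^{⊗(n+2)} → A^{⊗(n+1)}`:
`qb ∘ L_D^{k,(n+1)} = L_D^{k,(n)} ∘ qb`. -/
theorem q_hochschild_differential_commutes_with_higher_derivation_operator
    {A : Type*} [CommRing A] [Algebra ℂ A]
    (D : ℕ → (A →ₗ[ℂ] A)) (hD0 : D 0 = LinearMap.id)
    (hD : ∀ (p : ℕ) (a a' : A),
      D p (a * a') = ∑ i ∈ Finset.range (p + 1), D i a * D (p - i) a')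
    (q : ℂ) (k n : ℕ)
    (d : Fin (n + 2) → ((⨂[ℂ] _ : Fin (n + 2), A) →ₗ[ℂ] ⨂[ℂ] _ : Fin (n + 1), A))
    (hd : ∀ (i : Fin (n + 2)) (a : Fin (n + 2) → A),
      d i (tprod ℂ a) =
        if (i : ℕ) < n + 1 then
          tprod ℂ (fun j : Fin (n + 1) =>
            if (j : ℕ) < (i : ℕ) then a j.castSucc
            else if (j : ℕ) = (i : ℕ) then a j.castSucc * a j.succ
            else a j.succ)
        else
          tprod ℂ (fun j : Fin (n + 1) =>
            if (j : ℕ) = 0 then a (Fin.last (n + 1)) * a 0 else a j.castSucc))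
    (L₁ : (⨂[ℂ] _ : Fin (n + 2), A) →ₗ[ℂ] ⨂[ℂ] _ : Fin (n + 2), A)
    (L₀ : (⨂[ℂ] _ : Fin (n + 1), A) →ₗ[ℂ] ⨂[ℂ] _ : Fin (n + 1), A)
    (hL₁ : ∀ a : Fin (n + 2) → A,
      L₁ (tprod ℂ a) =
        ∑ p ∈ Finset.Nat.antidiagonalTuple (n + 2) k, tprod ℂ (fun i => D (p i) (a i)))
    (hL₀ : ∀ a : Fin (n + 1) → A,
      L₀ (tprod ℂ a) =
        ∑ p ∈ Finset.Nat.antidiagonalTuple (n + 1) k, tprod ℂ (fun i => D (p i) (a i))) :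
    (∑ i : Fin (n + 2), q ^ (i : ℕ) • d i) ∘ₗ L₁ =
      L₀ ∘ₗ (∑ i : Fin (n + 2), q ^ (i : ℕ) • d i) :=
  q_hochschild_differential_commutes_with_higher_derivation_operator_general D hD q k n d hd L₁ L₀
    hL₁ hL₀
end

section
/- Let A be a commutative algebra over ℂ, let (d_r)_{r≥1} be a sequence of ℂ-derivations of A, and let (D_p)_{p≥0} be a sequence of ℂ-linear maps A → A satisfying D_0 = id_A and, for every M ≥ 0, (M+1)·D_{M+1} = Σ_{m=0}^{M} d_{m+1} ∘ D_{M−m}. Fix n ≥ 0 and define ℂ-linear endomorphisms U_K of A^{⊗(n+1)} recursively by U_0 = id and (K+1)·U_{K+1} = Σ_{m=0}^{K} L_{d_{m+1}}^{(n)} ∘ U_{K−m} for K ≥ 0. Then for every k ≥ 0 and all a_0, ..., a_n ∈ A, U_k(a_0 ⊗ a_1 ⊗ ⋯ ⊗ a_n) = Σ_{p_0+p_1+⋯+p_n = k} D_{p_0}(a_0) ⊗ D_{p_1}(a_1) ⊗ ⋯ ⊗ D_{p_n}(a_n), the sum being over all (n+1)-tuples of non-negative integers summing to k. -/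
/-! Both sides, as sequences in `k`, satisfy the recursion
`(K + 1) • x (K + 1) = ∑ m ≤ K, L_{d (m+1)} (x (K - m))` with the same initial term, and in
characteristic zero such a recursion determines its solution. On the right-hand side
`L_{d (m+1)}` hits one slot `i` of the term with multi-index `q`; putting `p = q + (m + 1) e_i`
regroups the sum over `(m, q)` as a sum over `|p| = K + 1` and `m < p i`, and Mirzavaziri's
recursion collapses the sum over `m` to `p i • D (p i) (a i)`. Summing over `i` then produces
the factor `∑ i, p i = K + 1`. -/

open PiTensorProduct Finset
open scoped TensorProduct

theorem eq_of_smul_succ_eq_sum_range {𝕜 V : Type*} [DivisionRing 𝕜] [CharZero 𝕜]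
    [AddCommGroup V] [Module 𝕜 V] (f : ℕ → V → V) {x y : ℕ → V} (h0 : x 0 = y 0)
    (hx : ∀ K, ((K + 1 : ℕ) : 𝕜) • x (K + 1) = ∑ m ∈ range (K + 1), f m (x (K - m)))
    (hy : ∀ K, ((K + 1 : ℕ) : 𝕜) • y (K + 1) = ∑ m ∈ range (K + 1), f m (y (K - m))) :
    x = y := by
  funext k
  induction k using Nat.strong_induction_on with
  | _ k ih =>
    rcases k with _ | K
    · exact h0
    · have hK : ((K + 1 : ℕ) : 𝕜) ≠ 0 := Nat.cast_ne_zero.mpr K.succ_ne_zero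
      rw [← smul_right_inj hK, hx, hy]
      exact sum_congr rfl fun m _ => by rw [ih (K - m) (by omega)]

theorem Finset.Nat.sum_range_sum_antidiagonalTuple_sub {β : Type*} [AddCommMonoid β] {k : ℕ}
    (i : Fin k) (K : ℕ) (g : ℕ → (Fin k → ℕ) → β) :
    ∑ m ∈ range (K + 1), ∑ q ∈ Nat.antidiagonalTuple k (K - m), g m q =
      ∑ p ∈ Nat.antidiagonalTuple k (K + 1), ∑ m ∈ range (p i),
        g m (p - Pi.single i (m + 1)) := by
  have single_le {p : Fin k → ℕ} {c : ℕ} (h : c ≤ p i) : Pi.single i c ≤ p := by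
    intro j; rcases eq_or_ne j i with rfl | hj <;> simp_all
  rw [sum_sigma', sum_sigma']
  refine sum_nbij' (fun x => ⟨x.2 + Pi.single i (x.1 + 1), x.1⟩)
    (fun y => ⟨y.2, y.1 - Pi.single i (y.2 + 1)⟩) ?_ ?_ ?_ ?_ ?_
  · rintro ⟨m, q⟩ h
    simp only [mem_sigma, mem_range, Nat.mem_antidiagonalTuple] at h ⊢
    simp only [Pi.add_apply, sum_add_distrib, h.2, sum_pi_single', mem_univ, ↓reduceIte,
      Pi.single_eq_same]
    omega
  · rintro ⟨p, m⟩ h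
    simp only [mem_sigma, mem_range, Nat.mem_antidiagonalTuple] at h ⊢
    have := single_le_sum (fun j _ => Nat.zero_le (p j)) (mem_univ i)
    rw [Pi.sub_def, sum_tsub_distrib _ fun j _ => single_le h.2 j, sum_pi_single']
    simp only [mem_univ, ↓reduceIte]
    omega
  · rintro ⟨m, q⟩ -
    simp
  · rintro ⟨p, m⟩ h
    simp only [mem_sigma, mem_range, Nat.mem_antidiagonalTuple] at h
    simp [tsub_add_cancel_of_le (single_le h.2)]
  · rintro ⟨m, q⟩ -
    simp

section

variable {R M : Type*} [CommSemiring R] [AddCommMonoid M] [Module R M] (d D : ℕ → M →ₗ[R] M)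

theorem sum_range_apply_sub_eq_smul
    (hDrec : ∀ N : ℕ, ((N + 1 : ℕ) : R) • D (N + 1) =
      ∑ m ∈ range (N + 1), d (m + 1) ∘ₗ D (N - m))
    (N : ℕ) (x : M) : ∑ m ∈ range N, d (m + 1) (D (N - (m + 1)) x) = (N : R) • D N x := by
  rcases N with _ | N
  · simp
  · rw [← LinearMap.smul_apply, hDrec N, LinearMap.sum_apply]
    exact sum_congr rfl fun m _ => by
      rw [LinearMap.comp_apply, Nat.add_sub_add_right]

theorem sum_range_tprod_update_eq_smul
    (hDrec : ∀ N : ℕ, ((N + 1 : ℕ) : R) • D (N + 1) =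
      ∑ m ∈ range (N + 1), d (m + 1) ∘ₗ D (N - m))
    {n : ℕ} (a : Fin n → M) (p : Fin n → ℕ) (i : Fin n) :
    ∑ m ∈ range (p i), tprod R (Function.update (fun j => D (p j) (a j)) i
      (d (m + 1) (D (p i - (m + 1)) (a i)))) = (p i : R) • tprod R (fun j => D (p j) (a j)) := by
  rw [← MultilinearMap.map_update_sum, sum_range_apply_sub_eq_smul d D hDrec,
    MultilinearMap.map_update_smul, Function.update_eq_self]

noncomputable def sumTprodAntidiagonalTuple {n : ℕ} (a : Fin n → M) (k : ℕ) :
    ⨂[R] _ : Fin n, M :=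
  ∑ p ∈ Nat.antidiagonalTuple n k, tprod R (fun i => D (p i) (a i))

theorem smul_sumTprodAntidiagonalTuple_succ
    (hDrec : ∀ N : ℕ, ((N + 1 : ℕ) : R) • D (N + 1) =
      ∑ m ∈ range (N + 1), d (m + 1) ∘ₗ D (N - m))
    {n : ℕ} (Ld : ℕ → (⨂[R] _ : Fin n, M) →ₗ[R] ⨂[R] _ : Fin n, M)
    (hLd : ∀ (r : ℕ) (a : Fin n → M),
      Ld r (tprod R a) = ∑ i, tprod R (Function.update a i (d r (a i))))
    (a : Fin n → M) (K : ℕ) :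
    ((K + 1 : ℕ) : R) • sumTprodAntidiagonalTuple D a (K + 1) =
      ∑ m ∈ range (K + 1), Ld (m + 1) (sumTprodAntidiagonalTuple D a (K - m)) := by
  symm
  calc ∑ m ∈ range (K + 1), Ld (m + 1) (sumTprodAntidiagonalTuple D a (K - m))
      = ∑ i, ∑ m ∈ range (K + 1), ∑ q ∈ Nat.antidiagonalTuple n (K - m),
          tprod R (Function.update (fun j => D (q j) (a j)) i (d (m + 1) (D (q i) (a i)))) := by
        rw [sum_comm]
        refine sum_congr rfl fun m _ => ?_
        rw [sum_comm, sumTprodAntidiagonalTuple, map_sum]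
        simp only [hLd]
    _ = ∑ i, ∑ p ∈ Nat.antidiagonalTuple n (K + 1), ∑ m ∈ range (p i),
          tprod R (Function.update (fun j => D (p j) (a j)) i
            (d (m + 1) (D (p i - (m + 1)) (a i)))) := by
        refine sum_congr rfl fun i _ => ?_
        rw [Nat.sum_range_sum_antidiagonalTuple_sub i]
        refine sum_congr rfl fun p _ => sum_congr rfl fun m _ => congrArg _ ?_
        ext j
        rcases eq_or_ne j i with rfl | hj <;> simp [*]
    _ = ∑ p ∈ Nat.antidiagonalTuple n (K + 1),
          (∑ i, (p i : R)) • tprod R (fun j => D (p j) (a j)) := by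
        simp only [sum_range_tprod_update_eq_smul d D hDrec, sum_smul]
        exact sum_comm
    _ = ((K + 1 : ℕ) : R) • sumTprodAntidiagonalTuple D a (K + 1) := by
        rw [sumTprodAntidiagonalTuple, smul_sum]
        refine sum_congr rfl fun p hp => ?_
        rw [← Nat.cast_sum, Nat.mem_antidiagonalTuple.mp hp]

end

/-- Let `(d_r)_{r≥1}` be a sequence of ℂ-derivations of `A` and `(D_p)`
a sequence of ℂ-linear maps with `D_0 = id` and `(M+1)·D_{M+1} = ∑_{m=0}^M d_{m+1} ∘ D_{M−m}`
(Mirzavaziri's recursion).  Define endomorphisms `U_K` of `A^{⊗(n+1)}` by `U_0 = id` and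
`(K+1)·U_{K+1} = ∑_{m=0}^K L_{d_{m+1}} ∘ U_{K−m}`, where `L_{d_r}` is the Lie derivative of
`d_r`.  Then for every `k` and all pure tensors,
`U_k(a_0 ⊗ ⋯ ⊗ a_n) = ∑_{p_0+⋯+p_n=k} D_{p_0}(a_0) ⊗ ⋯ ⊗ D_{p_n}(a_n)`. -/
theorem mirzavaziri_recursion_comultiplication
    {A : Type*} [CommRing A] [Algebra ℂ A]
    (d : ℕ → Derivation ℂ A A)
    (D : ℕ → (A →ₗ[ℂ] A)) (hD0 : D 0 = LinearMap.id)
    (hDrec : ∀ M : ℕ, ((M + 1 : ℕ) : ℂ) • D (M + 1) =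
      ∑ m ∈ Finset.range (M + 1), (d (m + 1)).toLinearMap ∘ₗ D (M - m))
    (n : ℕ)
    (Ld : ℕ → ((⨂[ℂ] _ : Fin (n + 1), A) →ₗ[ℂ] ⨂[ℂ] _ : Fin (n + 1), A))
    (hLd : ∀ (r : ℕ) (a : Fin (n + 1) → A),
      Ld r (tprod ℂ a) = ∑ i, tprod ℂ (Function.update a i (d r (a i))))
    (U : ℕ → ((⨂[ℂ] _ : Fin (n + 1), A) →ₗ[ℂ] ⨂[ℂ] _ : Fin (n + 1), A))
    (hU0 : U 0 = LinearMap.id)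
    (hUrec : ∀ K : ℕ, ((K + 1 : ℕ) : ℂ) • U (K + 1) =
      ∑ m ∈ Finset.range (K + 1), Ld (m + 1) ∘ₗ U (K - m)) :
    ∀ (k : ℕ) (a : Fin (n + 1) → A),
      U k (tprod ℂ a) =
        ∑ p ∈ Finset.Nat.antidiagonalTuple (n + 1) k, tprod ℂ (fun i => D (p i) (a i)) := by
  intro k a
  have hU : ∀ K, ((K + 1 : ℕ) : ℂ) • U (K + 1) (tprod ℂ a) =
      ∑ m ∈ range (K + 1), Ld (m + 1) (U (K - m) (tprod ℂ a)) := fun K => by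
    rw [← LinearMap.smul_apply, hUrec, LinearMap.sum_apply]
    rfl
  have h0 : U 0 (tprod ℂ a) = sumTprodAntidiagonalTuple D a 0 := by
    simp [sumTprodAntidiagonalTuple, Nat.antidiagonalTuple_zero_right, hU0, hD0]
  have hS := smul_sumTprodAntidiagonalTuple_succ (fun r => (d r).toLinearMap) D hDrec Ld hLd a
  exact congrFun (eq_of_smul_succ_eq_sum_range (fun m => Ld (m + 1))
    (x := fun K => U K (tprod ℂ a)) h0 hU hS) k
end
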